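/- arXiv:2111.14780 — 2 statements merged into one kernel-verified Lean document; each statement's English description precedes it below -/
import Mathlib

section
/- The sequence generated by the alternating L1-PCA iteration is monotone: if B^{(k+1)} = sgn(X^H unt(X B^{(k)})), then ‖X B^{(k)}‖_* ≤ ‖X B^{(k+1)}‖_* for all k (assuming all relevant matrices X B^{(k)} have full column rank and no entry of X^H unt(X B^{(k)}) vanishes). -/
/-!
Write `Q = U Vᴴ` for the polar factor of `X B` and `W = Xᴴ Q`. Then
`‖X B‖_* = Re tr(Qᴴ X B) = Re tr(Wᴴ B) ≤ Σ |W_ij|`, since `B` has unimodular entries, and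
equality holds for `B' = sgn W`. Finally `Re tr(Qᴴ A) ≤ ‖A‖_*` for every `Q` with orthonormal
columns: in an SVD `A = U' D' V'ᴴ` the diagonal of `(Q V')ᴴ U'` is bounded by `1` by
Cauchy–Schwarz, so `‖X B‖_* ≤ Re tr(Qᴴ X B') ≤ ‖X B'‖_*`.
-/
open Matrix

variable {R 𝕜 : Type*} [RCLike 𝕜] {m n l r : Type*}

theorem Matrix.conjTranspose_mul_self_eq_one_of_polar [CommSemiring R] [StarRing R] [Fintype m]
    [Fintype r] [DecidableEq n] [DecidableEq r] {U : Matrix m r R} {V : Matrix n r R}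
    (hU : Uᴴ * U = 1) (hV : V * Vᴴ = 1) : (U * Vᴴ)ᴴ * (U * Vᴴ) = 1 := by
  rw [conjTranspose_mul, conjTranspose_conjTranspose, Matrix.mul_assoc, ← Matrix.mul_assoc Uᴴ,
    hU, Matrix.one_mul, hV]

theorem Matrix.trace_polar_conjTranspose_mul_svd [CommSemiring R] [StarRing R] [Fintype m]
    [Fintype n] [Fintype r] [DecidableEq r] {U : Matrix m r R} {V : Matrix n r R}
    (hU : Uᴴ * U = 1) (hV : Vᴴ * V = 1) (s : r → R) :
    trace ((U * Vᴴ)ᴴ * (U * diagonal s * Vᴴ)) = ∑ i, s i := by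
  simp only [conjTranspose_mul, conjTranspose_conjTranspose, Matrix.mul_assoc]
  rw [← Matrix.mul_assoc Uᴴ U, hU, Matrix.one_mul, trace_mul_comm, Matrix.mul_assoc, hV,
    Matrix.mul_one, trace_diagonal]

theorem Matrix.trace_conjTranspose_mul [NonUnitalNonAssocSemiring R] [Star R] [Fintype m]
    [Fintype n] (A B : Matrix m n R) :
    trace (Aᴴ * B) = ∑ i, ∑ j, star (A i j) * B i j := by
  rw [Finset.sum_comm]; rfl

theorem Matrix.conjTranspose_mul_apply_eq_inner [Fintype m] (A : Matrix m n 𝕜)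
    (B : Matrix m l 𝕜) (i : n) (j : l) :
    (Aᴴ * B) i j = inner 𝕜 (WithLp.toLp 2 fun k => A k i) (WithLp.toLp 2 fun k => B k j) := by
  simp only [mul_apply, conjTranspose_apply, EuclideanSpace.inner_toLp_toLp, dotProduct,
    Pi.star_apply, mul_comm]

theorem Matrix.norm_toLp_col_eq_one [Fintype m] {A : Matrix m n 𝕜} {i : n}
    (h : (Aᴴ * A) i i = 1) : ‖(WithLp.toLp 2 fun k => A k i : EuclideanSpace 𝕜 m)‖ = 1 := by
  rw [conjTranspose_mul_apply_eq_inner, inner_self_eq_norm_sq_to_K] at h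
  exact (pow_eq_one_iff_of_nonneg (norm_nonneg _) two_ne_zero).mp (by exact_mod_cast h)

theorem Matrix.norm_conjTranspose_mul_apply_le_one [Fintype m] {A : Matrix m n 𝕜}
    {B : Matrix m l 𝕜} {i : n} {j : l} (hA : (Aᴴ * A) i i = 1) (hB : (Bᴴ * B) j j = 1) :
    ‖(Aᴴ * B) i j‖ ≤ 1 := by
  rw [conjTranspose_mul_apply_eq_inner]
  calc _ ≤ _ := norm_inner_le_norm (𝕜 := 𝕜) _ _
    _ = 1 := by rw [norm_toLp_col_eq_one hA, norm_toLp_col_eq_one hB, one_mul]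

theorem Matrix.re_trace_mul_diagonal_le [Fintype r] [DecidableEq r] {M : Matrix r r 𝕜}
    (hM : ∀ i, ‖M i i‖ ≤ 1) {s : r → ℝ} (hs : ∀ i, 0 ≤ s i) :
    RCLike.re (trace (M * diagonal fun i => (s i : 𝕜))) ≤ ∑ i, s i := by
  simp only [trace, diag_apply, mul_diagonal, map_sum]
  refine Finset.sum_le_sum fun i _ => (RCLike.re_le_norm _).trans ?_
  rw [norm_mul, RCLike.norm_ofReal, abs_of_nonneg (hs i)]
  exact mul_le_of_le_one_left (hs i) (hM i)

theorem Matrix.re_trace_conjTranspose_mul_svd_le [Fintype m] [Fintype n] [Fintype r]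
    [DecidableEq n] [DecidableEq r] {Q : Matrix m n 𝕜} {U : Matrix m r 𝕜} {V : Matrix n r 𝕜}
    (hQ : Qᴴ * Q = 1) (hU : Uᴴ * U = 1) (hV : Vᴴ * V = 1) {s : r → ℝ} (hs : ∀ i, 0 ≤ s i) :
    RCLike.re (trace (Qᴴ * (U * diagonal (fun i => (s i : 𝕜)) * Vᴴ))) ≤ ∑ i, s i := by
  have hQV : (Q * V)ᴴ * (Q * V) = 1 := by
    rw [conjTranspose_mul, Matrix.mul_assoc, ← Matrix.mul_assoc Qᴴ, hQ, Matrix.one_mul, hV]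
  have hcycle : trace (Qᴴ * (U * diagonal (fun i => (s i : 𝕜)) * Vᴴ))
      = trace ((Q * V)ᴴ * U * diagonal fun i => (s i : 𝕜)) := by
    rw [← Matrix.mul_assoc, trace_mul_comm, conjTranspose_mul]
    simp only [Matrix.mul_assoc]
  rw [hcycle]
  exact re_trace_mul_diagonal_le
    (fun i => norm_conjTranspose_mul_apply_le_one (hQV ▸ one_apply_eq i) (hU ▸ one_apply_eq i)) hs

theorem Matrix.re_trace_conjTranspose_mul_le_sum_norm [Fintype m] [Fintype n]
    (W : Matrix m n 𝕜) {B : Matrix m n 𝕜} (hB : ∀ i j, ‖B i j‖ ≤ 1) :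
    RCLike.re (trace (Wᴴ * B)) ≤ ∑ i, ∑ j, ‖W i j‖ := by
  simp only [trace_conjTranspose_mul, map_sum]
  gcongr with i _ j _
  refine (RCLike.re_le_norm _).trans ?_
  rw [norm_mul, norm_star]
  exact mul_le_of_le_one_right (norm_nonneg _) (hB i j)

-- Entries `W i j = 0` contribute `0` on both sides, as `0 / 0 = 0`.
theorem Matrix.trace_conjTranspose_mul_sign [Fintype m] [Fintype n] (W : Matrix m n 𝕜) :
    trace (Wᴴ * of fun i j => W i j / (‖W i j‖ : 𝕜)) = ∑ i, ∑ j, (‖W i j‖ : 𝕜) := by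
  simp only [trace_conjTranspose_mul, of_apply, mul_div_assoc', RCLike.star_def, RCLike.conj_mul,
    sq, mul_self_div_self]

theorem stmt8_general {D N K : ℕ} (X : Matrix (Fin D) (Fin N) ℂ)
    (B : ℕ → Matrix (Fin N) (Fin K) ℂ)
    (U : ℕ → Matrix (Fin D) (Fin K) ℂ) (V : ℕ → Matrix (Fin K) (Fin K) ℂ)
    (d : ℕ → Fin K → ℝ)
    (hU : ∀ p, (U p)ᴴ * U p = 1) (hV : ∀ p, (V p)ᴴ * V p = 1)
    (hd : ∀ p i, 0 < d p i)
    (hSVD : ∀ p, X * B p = U p * Matrix.diagonal (fun i => (d p i : ℂ)) * (V p)ᴴ)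
    (hmod : ∀ p i j, ‖B p i j‖ = 1)
    (hrec : ∀ p, B (p + 1) = Matrix.of fun i j =>
      (Xᴴ * (U p * (V p)ᴴ)) i j / (‖(Xᴴ * (U p * (V p)ᴴ)) i j‖ : ℂ)) :
    ∀ p, ∑ i, d p i ≤ ∑ i, d (p + 1) i := by
  intro p
  set Q := U p * (V p)ᴴ
  have hQ : Qᴴ * Q = 1 := conjTranspose_mul_self_eq_one_of_polar (hU p) (mul_eq_one_comm.mp (hV p))
  have hpair : ∀ B' : Matrix (Fin N) (Fin K) ℂ, Qᴴ * (X * B') = (Xᴴ * Q)ᴴ * B' := fun B' => by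
    rw [conjTranspose_mul Xᴴ Q, conjTranspose_conjTranspose, Matrix.mul_assoc]
  calc ∑ i, d p i = (trace (Qᴴ * (X * B p))).re := by
        rw [hSVD, trace_polar_conjTranspose_mul_svd (hU p) (hV p), Complex.re_sum]
        simp only [Complex.ofReal_re]
    _ ≤ ∑ i, ∑ j, ‖(Xᴴ * Q) i j‖ := by
        rw [hpair]
        exact re_trace_conjTranspose_mul_le_sum_norm _ fun i j => (hmod p i j).le
    _ = (trace (Qᴴ * (X * B (p + 1)))).re := by
        rw [hpair, hrec p]
        simpa using congrArg RCLike.re (trace_conjTranspose_mul_sign (Xᴴ * Q)).symm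
    _ ≤ ∑ i, d (p + 1) i := by
        rw [hSVD]
        exact re_trace_conjTranspose_mul_svd_le hQ (hU _) (hV _) fun i => (hd _ i).le

/-- Monotonicity of the alternating L1-PCA iteration: if
`B^{(p+1)} = sgn(Xᴴ unt(X B^{(p)}))`, where `X B^{(p)} = U_p D_p V_pᴴ` is a thin SVD
with positive singular values `d p`, `unt(X B^{(p)}) = U_p V_pᴴ`, all entries of
`B^{(p)}` are unimodular, and no entry of `Xᴴ unt(X B^{(p)})` vanishes, then the
nuclear norms `‖X B^{(p)}‖_* = Σᵢ d p i` are nondecreasing in `p`. -/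
theorem stmt8 {D N K : ℕ} (X : Matrix (Fin D) (Fin N) ℂ)
    (B : ℕ → Matrix (Fin N) (Fin K) ℂ)
    (U : ℕ → Matrix (Fin D) (Fin K) ℂ) (V : ℕ → Matrix (Fin K) (Fin K) ℂ)
    (d : ℕ → Fin K → ℝ)
    (hU : ∀ p, (U p)ᴴ * U p = 1) (hV : ∀ p, (V p)ᴴ * V p = 1)
    (hd : ∀ p i, 0 < d p i)
    (hSVD : ∀ p, X * B p = U p * Matrix.diagonal (fun i => (d p i : ℂ)) * (V p)ᴴ)
    (hmod : ∀ p i j, ‖B p i j‖ = 1)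
    (hnz : ∀ p i j, (Xᴴ * (U p * (V p)ᴴ)) i j ≠ 0)
    (hrec : ∀ p, B (p + 1) = Matrix.of fun i j =>
      (Xᴴ * (U p * (V p)ᴴ)) i j / (‖(Xᴴ * (U p * (V p)ᴴ)) i j‖ : ℂ)) :
    ∀ p, ∑ i, d p i ≤ ∑ i, d (p + 1) i :=
  stmt8_general X B U V d hU hV hd hSVD hmod hrec
end

section
/- For fixed orthonormal-column matrices M_i ∈ ℂ^{I_i×R_i} (M_i^H M_i = I), the core tensor minimizing ‖𝒳 − 𝒞 ×_1 M_1 ⋯ ×_m M_m‖_F over all 𝒞 ∈ ℂ^{R_1×⋯×R_m} is 𝒞* = 𝒳 ×_1 M_1^H ⋯ ×_m M_m^H, and with this choice ‖𝒳 − 𝒞* ×_1 M_1 ⋯ ×_m M_m‖_F² = ‖𝒳‖_F² − ‖𝒳 ×_1 M_1^H ⋯ ×_m M_m^H‖_F²; hence minimizing the approximation error over (𝒞, M_1,…,M_m) is equivalent to maximizing ‖𝒳 ×_1 M_1^H ⋯ ×_m M_m^H‖_F over the M_i. -/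
/-
Flattening multi-indices, `𝒞 ↦ 𝒞 ×₁ M₁ ⋯ ×ₘ Mₘ` is multiplication by the Kronecker matrix
`K = ⊗ᵢ Mᵢ` restricted to the index boxes, and `𝒳 ×₁ M₁ᴴ ⋯ ×ₘ Mₘᴴ` is `Kᴴ x`. The columns of `K`
are orthonormal because those of every `Mᵢ` are. For such `K`, `x - K c` splits into the
orthogonal parts `x - K Kᴴ x` and `K (Kᴴ x - c)`, and `K` is an isometry, so
`‖x - K c‖² = ‖x‖² - ‖Kᴴ x‖² + ‖Kᴴ x - c‖²`, which is least exactly at `c = Kᴴ x`.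
-/

/-- The Tucker/multilinear product `𝒞 ×₁ M 1 ×₂ ⋯ ×ₘ M m` of an `m`-th order core
tensor (indexed by `Fin m → ℕ`, with dimensions `R`) with matrices `M i`. -/
noncomputable def tuckerProd {m : ℕ} (R : Fin m → ℕ) (C : (Fin m → ℕ) → ℂ)
    (M : ∀ _ : Fin m, ℕ → ℕ → ℂ) : (Fin m → ℕ) → ℂ :=
  fun idx => ∑ jdx ∈ Fintype.piFinset (fun i => Finset.range (R i)),
    (∏ i, M i (idx i) (jdx i)) * C jdx

open Finset Matrix

section LeastSquares

variable {𝕜 E F : Type*} [RCLike 𝕜] [NormedAddCommGroup E] [InnerProductSpace 𝕜 E]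
  [NormedAddCommGroup F] [InnerProductSpace 𝕜 F]

theorem norm_sub_apply_sq_of_adjoint_leftInverse {T : F →ₗ[𝕜] E} {S : E →ₗ[𝕜] F}
    (hadj : ∀ c x, inner 𝕜 (T c) x = inner 𝕜 c (S x)) (hST : ∀ c, S (T c) = c) (x : E) (c : F) :
    ‖x - T c‖ ^ 2 = ‖x‖ ^ 2 - ‖S x‖ ^ 2 + ‖S x - c‖ ^ 2 := by
  have hisometry : ∀ d, ‖T d‖ = ‖d‖ := fun d => by
    rw [norm_eq_sqrt_re_inner (𝕜 := 𝕜), norm_eq_sqrt_re_inner (𝕜 := 𝕜), hadj, hST]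
  have hperp : ∀ d, inner 𝕜 (x - T (S x)) (T d) = 0 := fun d => by
    rw [← inner_conj_symm, hadj, map_sub, hST, sub_self, inner_zero_right, map_zero]
  have hpyth : ∀ d, ‖x - T (S x) + T d‖ ^ 2 = ‖x - T (S x)‖ ^ 2 + ‖d‖ ^ 2 := fun d => by
    rw [@norm_add_sq 𝕜, hperp, map_zero, mul_zero, add_zero, hisometry]
  have h₁ := hpyth (S x - c)
  have h₂ := hpyth (S x)
  rw [map_sub, sub_add_sub_cancel] at h₁
  rw [sub_add_cancel] at h₂
  linarith

end LeastSquares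

namespace Matrix

theorem sum_norm_sub_mulVec_sq {𝕜 ι κ : Type*} [RCLike 𝕜] [Fintype ι] [Fintype κ]
    [DecidableEq κ] (A : Matrix ι κ 𝕜) (hA : Aᴴ * A = 1) (x : ι → 𝕜) (c : κ → 𝕜) :
    ∑ i, ‖x i - (A *ᵥ c) i‖ ^ 2
      = ∑ i, ‖x i‖ ^ 2 - ∑ j, ‖(Aᴴ *ᵥ x) j‖ ^ 2 + ∑ j, ‖(Aᴴ *ᵥ x) j - c j‖ ^ 2 := by
  classical
  have hadj : ∀ u v, inner 𝕜 (toLpLin 2 2 A u) v = inner 𝕜 u (toLpLin 2 2 Aᴴ v) := by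
    intro u v
    simp only [toLpLin_apply, EuclideanSpace.inner_eq_star_dotProduct, star_mulVec]
    rw [dotProduct_comm, ← dotProduct_mulVec, dotProduct_comm]
  have hST : ∀ u, toLpLin 2 2 Aᴴ (toLpLin 2 2 A u) = u := by
    simp [toLpLin_apply, mulVec_mulVec, hA]
  simpa [EuclideanSpace.norm_sq_eq, toLpLin_apply] using
    norm_sub_apply_sq_of_adjoint_leftInverse hadj hST (WithLp.toLp 2 x) (WithLp.toLp 2 c)

variable {ι α β R : Type*} [Fintype ι] [DecidableEq ι]

def piKronecker [CommMonoid R] (s : ι → Finset α) (t : ι → Finset β) (M : ι → α → β → R) :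
    Matrix (Fintype.piFinset s) (Fintype.piFinset t) R :=
  fun a b => ∏ i, M i (a.1 i) (b.1 i)

theorem conjTranspose_piKronecker [CommMonoid R] [StarMul R] (s : ι → Finset α)
    (t : ι → Finset β) (M : ι → α → β → R) :
    (piKronecker s t M)ᴴ = piKronecker t s fun i b a => star (M i a b) := by
  ext b a
  simp [piKronecker, conjTranspose_apply, star_prod]

theorem conjTranspose_piKronecker_mul_self [CommSemiring R] [StarRing R] [DecidableEq β]
    {s : ι → Finset α} {t : ι → Finset β} {M : ι → α → β → R}
    (hM : ∀ i, ∀ b ∈ t i, ∀ b' ∈ t i,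
      ∑ a ∈ s i, star (M i a b) * M i a b' = if b = b' then 1 else 0) :
    (piKronecker s t M)ᴴ * piKronecker s t M = 1 := by
  ext b b'
  have hb := Fintype.mem_piFinset.mp b.2
  have hb' := Fintype.mem_piFinset.mp b'.2
  rw [conjTranspose_piKronecker, mul_apply, one_apply]
  simp only [piKronecker, ← prod_mul_distrib]
  rw [sum_coe_sort (Fintype.piFinset s) fun a => ∏ i, star (M i (a i) (b.1 i)) * M i (a i) (b'.1 i),
    ← prod_univ_sum s fun i a => star (M i a (b.1 i)) * M i a (b'.1 i),
    prod_congr rfl fun i _ => hM i _ (hb i) _ (hb' i), prod_boole]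
  congr 1
  simp only [mem_univ, true_imp_iff, Subtype.ext_iff, funext_iff]

end Matrix

theorem tuckerProd_eq_mulVec {m : ℕ} (I R : Fin m → ℕ) (C : (Fin m → ℕ) → ℂ)
    (M : ∀ _ : Fin m, ℕ → ℕ → ℂ) (a : Fintype.piFinset fun i => range (I i)) :
    tuckerProd R C M a
      = (piKronecker (fun i => range (I i)) (fun i => range (R i)) M *ᵥ fun b => C b) a :=
  (sum_coe_sort _ fun b => (∏ i, M i (a.1 i) (b i)) * C b).symm

/-- For fixed column-orthonormal factor matrices `M i : I i × R i`, the core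
minimizing `‖𝒳 − 𝒞 ×₁ M₁ ⋯ ×ₘ Mₘ‖_F` is `𝒞* = 𝒳 ×₁ M₁ᴴ ⋯ ×ₘ Mₘᴴ`, and then
`‖𝒳 − 𝒞* ×₁ M₁ ⋯ ×ₘ Mₘ‖_F² = ‖𝒳‖_F² − ‖𝒞*‖_F²`. -/
theorem stmt19 {m : ℕ} (I R : Fin m → ℕ) (X : (Fin m → ℕ) → ℂ)
    (M : ∀ _ : Fin m, ℕ → ℕ → ℂ)
    (hM : ∀ i, ∀ b ∈ Finset.range (R i), ∀ b' ∈ Finset.range (R i),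
      ∑ a ∈ Finset.range (I i), star (M i a b) * M i a b' = if b = b' then 1 else 0) :
    (∀ C : (Fin m → ℕ) → ℂ,
      (∑ idx ∈ Fintype.piFinset (fun i => Finset.range (I i)),
        ‖X idx - tuckerProd R (tuckerProd I X (fun i a b => star (M i b a))) M idx‖ ^ 2)
      ≤ ∑ idx ∈ Fintype.piFinset (fun i => Finset.range (I i)),
          ‖X idx - tuckerProd R C M idx‖ ^ 2) ∧
    (∑ idx ∈ Fintype.piFinset (fun i => Finset.range (I i)),
        ‖X idx - tuckerProd R (tuckerProd I X (fun i a b => star (M i b a))) M idx‖ ^ 2)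
      = (∑ idx ∈ Fintype.piFinset (fun i => Finset.range (I i)), ‖X idx‖ ^ 2)
        - ∑ jdx ∈ Fintype.piFinset (fun i => Finset.range (R i)),
            ‖tuckerProd I X (fun i a b => star (M i b a)) jdx‖ ^ 2 := by
  set K := piKronecker (fun i => range (I i)) (fun i => range (R i)) M
  set x : Fintype.piFinset (fun i => range (I i)) → ℂ := fun a => X a
  have hcore : ∀ b : Fintype.piFinset (fun i => range (R i)),
      tuckerProd I X (fun i a b => star (M i b a)) b = (Kᴴ *ᵥ x) b := by
    intro b
    rw [conjTranspose_piKronecker]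
    exact tuckerProd_eq_mulVec R I X _ b
  have herror : ∀ C, ∑ idx ∈ Fintype.piFinset (fun i => range (I i)),
      ‖X idx - tuckerProd R C M idx‖ ^ 2
        = ∑ a, ‖x a‖ ^ 2 - ∑ b, ‖(Kᴴ *ᵥ x) b‖ ^ 2 + ∑ b, ‖(Kᴴ *ᵥ x) b - C b‖ ^ 2 := by
    intro C
    rw [← sum_norm_sub_mulVec_sq K (conjTranspose_piKronecker_mul_self hM), ← sum_coe_sort]
    simp only [tuckerProd_eq_mulVec]
    rfl
  have hoptimal :
      ∑ b, ‖(Kᴴ *ᵥ x) b - tuckerProd I X (fun i a b => star (M i b a)) b‖ ^ 2 = 0 :=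
    sum_eq_zero fun b _ => by rw [hcore, sub_self, norm_zero, zero_pow two_ne_zero]
  refine ⟨fun C => ?_, ?_⟩
  · rw [herror, herror, hoptimal, add_zero]
    exact le_add_of_nonneg_right (sum_nonneg fun _ _ => sq_nonneg _)
  · rw [herror, hoptimal, add_zero, ← sum_coe_sort (Fintype.piFinset fun i => range (R i))]
    simp only [hcore]
    exact congrArg (· - _) (sum_coe_sort _ fun idx => ‖X idx‖ ^ 2)
end
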